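/- arXiv:0906.3415 — 2 statements merged into one kernel-verified Lean document; each statement's English description precedes it below -/
import Mathlib

section
/- The function Φ_s is a normalized 3-cocycle on the cyclic group ℤ_n with values in the nonzero complex numbers; that is, Φ_s takes nonzero values, Φ_s(y,z,w)·Φ_s(x,yz,w)·Φ_s(x,y,z) = Φ_s(xy,z,w)·Φ_s(x,y,zw) for all x,y,z,w ∈ ℤ_n, and Φ_s(x, g^0, y) = 1 for all x, y ∈ ℤ_n. -/
/-!
`Φ_s(x, y, z) = 𝕢^{s · x · c(y, z)}`, where `c(y, z) = (y + z) / n ∈ {0, 1}` is the carry of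
adding representatives in `{0, …, n-1}`. The carry is the standard 2-cocycle of the extension
`0 → nℤ → ℤ → ℤ_n → 0`: both `c(x + y, z) + c(x, y)` and `c(x, y + z) + c(y, z)` equal
`(x + y + z) / n`. Combined with `(x + y)' = x + y - n · c(x, y)`, this shows that the
coboundary of `x · c(y, z)` is divisible by `n`, so it vanishes in the exponent of `𝕢`.
-/

/-- The 3-cocycle `Φ_s` on the cyclic group `ℤ_n` (written additively via `ZMod n`,
where `g^i` corresponds to `(i : ZMod n)`), defined by
`Φ_s(g^i, g^j, g^k) = 𝕢^{s i (j+k-(j+k)')/n}` for `0 ≤ i,j,k ≤ n-1`,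
where `i'` is the remainder of `i` modulo `n`. -/
noncomputable def PhiCocycle (n s : ℕ) (q : ℂ) (x y z : ZMod n) : ℂ :=
  q ^ (s * x.val * ((y.val + z.val - (y.val + z.val) % n) / n))

namespace ZMod

def carry (n : ℕ) (y z : ZMod n) : ℕ := (y.val + z.val) / n

variable {n : ℕ} [NeZero n]

lemma val_add_add_mul_carry (y z : ZMod n) : (y + z).val + n * carry n y z = y.val + z.val := by
  rw [val_add]
  exact Nat.mod_add_div _ _

lemma carry_add_left_add_carry (x y z : ZMod n) :
    carry n (x + y) z + carry n x y = (x.val + y.val + z.val) / n := by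
  rw [← val_add_add_mul_carry x y, carry, add_right_comm, Nat.add_mul_div_left _ _ (NeZero.pos n)]

lemma carry_add_right_add_carry (x y z : ZMod n) :
    carry n x (y + z) + carry n y z = (x.val + y.val + z.val) / n := by
  rw [add_assoc, ← val_add_add_mul_carry y z, carry, ← add_assoc,
    Nat.add_mul_div_left _ _ (NeZero.pos n)]

lemma carry_zero_left (y : ZMod n) : carry n 0 y = 0 := by
  rw [carry, val_zero, zero_add, Nat.div_eq_of_lt (val_lt y)]

lemma val_mul_carry_coboundary_modEq (x y z w : ZMod n) :
    y.val * carry n z w + x.val * carry n (y + z) w + x.val * carry n y z ≡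
      (x + y).val * carry n z w + x.val * carry n y (z + w) [MOD n] := by
  have hc := (carry_add_left_add_carry y z w).trans (carry_add_right_add_carry y z w).symm
  have hv := val_add_add_mul_carry x y
  have key : y.val * carry n z w + x.val * carry n (y + z) w + x.val * carry n y z =
      (x + y).val * carry n z w + x.val * carry n y (z + w) + carry n x y * carry n z w * n := by
    zify at hc hv ⊢
    linear_combination (x.val : ℤ) * hc - (carry n z w : ℤ) * hv
  rw [key]
  exact (Nat.modEq_add_mul_modulus_iff.mpr rfl).symm

end ZMod

lemma phiCocycle_eq_pow_carry (n s : ℕ) (q : ℂ) (x y z : ZMod n) :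
    PhiCocycle n s q x y z = q ^ (s * (x.val * ZMod.carry n y z)) := by
  rw [PhiCocycle, ZMod.carry, ← Nat.div_eq_sub_mod_div, mul_assoc]

theorem phiCocycle_is_normalized_three_cocycle_general
    (n : ℕ) (hn : 2 ≤ n) (q : ℂ) (hq : IsPrimitiveRoot q n)
    (s : ℕ) :
    (∀ x y z : ZMod n, PhiCocycle n s q x y z ≠ 0) ∧
    (∀ x y z w : ZMod n,
      PhiCocycle n s q y z w * PhiCocycle n s q x (y + z) w * PhiCocycle n s q x y z =
        PhiCocycle n s q (x + y) z w * PhiCocycle n s q x y (z + w)) ∧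
    (∀ x y : ZMod n, PhiCocycle n s q x 0 y = 1) := by
  have : NeZero n := ⟨by omega⟩
  refine ⟨fun x y z => pow_ne_zero _ (hq.ne_zero (NeZero.ne n)), fun x y z w => ?_,
    fun x y => ?_⟩
  · simp only [phiCocycle_eq_pow_carry, ← pow_add, ← mul_add]
    exact pow_eq_pow_of_modEq ((ZMod.val_mul_carry_coboundary_modEq x y z w).mul_left s)
      hq.pow_eq_one
  · rw [phiCocycle_eq_pow_carry, ZMod.carry_zero_left, mul_zero, mul_zero, pow_zero]

/-- `Φ_s` is a normalized 3-cocycle on `ℤ_n` with values in `ℂ∖{0}`. -/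
theorem phiCocycle_is_normalized_three_cocycle
    (n : ℕ) (hn : 2 ≤ n) (q : ℂ) (hq : IsPrimitiveRoot q n)
    (s : ℕ) (hs : s ≤ n - 1) :
    (∀ x y z : ZMod n, PhiCocycle n s q x y z ≠ 0) ∧
    (∀ x y z w : ZMod n,
      PhiCocycle n s q y z w * PhiCocycle n s q x (y + z) w * PhiCocycle n s q x y z =
        PhiCocycle n s q (x + y) z w * PhiCocycle n s q x y (z + w)) ∧
    (∀ x y : ZMod n, PhiCocycle n s q x 0 y = 1) :=
  phiCocycle_is_normalized_three_cocycle_general n hn q hq s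
end

section
/- Let G be a group, let Φ : G × G × G → ℂ∖{0} be a normalized 3-cocycle on G (so Φ(y,z,w)Φ(x,yz,w)Φ(x,y,z) = Φ(xy,z,w)Φ(x,y,zw) for all x,y,z,w ∈ G, and Φ(x,1,y) = 1), and let g ∈ G. Define, for elements e, f of the centralizer Z of g in G, Φ̃_g(e,f) = Φ(e,f,g)·Φ(ef,f^{-1},e^{-1})·Φ(e,fg,f^{-1}) / (Φ(efg,f^{-1},e^{-1})·Φ(e,f,f^{-1})). Then Φ̃_g is a 2-cocycle on Z, i.e., Φ̃_g(f,h)·Φ̃_g(e,fh) = Φ̃_g(e,f)·Φ̃_g(ef,h) for all e, f, h ∈ Z. -/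
/-!
Let `ψ(x) = Φ(g, x, x⁻¹)`. Three instances of the cocycle identity, read on the centralizer of
`g`, show that `Φ̃_g(e, f) = θ_g(e, f) · ψ(ef) / (ψ(e) ψ(f))`, where
`θ_g(e, f) = Φ(g, e, f) Φ(e, f, g) / Φ(e, g, f)` is the Dijkgraaf–Pasquier–Roche cocycle of the
twisted quantum double. Four more instances show that `θ_g` is a 2-cocycle on the centralizer,
and `ψ(ef) / (ψ(e) ψ(f))` is a coboundary, so the product is a 2-cocycle.
-/

noncomputable def PhiTilde {G : Type*} [Group G] (Φ : G → G → G → ℂ) (g a b : G) : ℂ :=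
  Φ a b g * Φ (a * b) b⁻¹ a⁻¹ * Φ a (b * g) b⁻¹ /
    (Φ (a * b * g) b⁻¹ a⁻¹ * Φ a b b⁻¹)

section TwoCocycle

variable {G M : Type*} [Group G]

def IsTwoCocycleOn [Mul M] (H : Subgroup G) (c : G → G → M) : Prop :=
  ∀ e f h, e ∈ H → f ∈ H → h ∈ H → c f h * c e (f * h) = c e f * c (e * f) h

variable {H : Subgroup G}

theorem IsTwoCocycleOn.mul [CommMonoid M] {c d : G → G → M} (hc : IsTwoCocycleOn H c)
    (hd : IsTwoCocycleOn H d) : IsTwoCocycleOn H fun a b => c a b * d a b := by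
  intro e f h he hf hh
  rw [mul_mul_mul_comm, hc e f h he hf hh, hd e f h he hf hh, mul_mul_mul_comm]

theorem IsTwoCocycleOn.congr [Mul M] {c d : G → G → M} (hc : IsTwoCocycleOn H c)
    (hcd : ∀ a ∈ H, ∀ b ∈ H, c a b = d a b) : IsTwoCocycleOn H d := by
  intro e f h he hf hh
  rw [← hcd f hf h hh, ← hcd e he _ (H.mul_mem hf hh), ← hcd e he f hf,
    ← hcd _ (H.mul_mem he hf) h hh]
  exact hc e f h he hf hh

theorem isTwoCocycleOn_div_mul [CommGroupWithZero M] {ψ : G → M} (hψ : ∀ x, ψ x ≠ 0) :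
    IsTwoCocycleOn H fun a b => ψ (a * b) / (ψ a * ψ b) := by
  intro e f h _ _ _
  field_simp [hψ]
  rw [mul_assoc]

end TwoCocycle

section ThreeCocycle

variable {G K : Type*} [Group G] [Field K]

def IsThreeCocycle (Φ : G → G → G → K) : Prop :=
  ∀ x y z w, Φ y z w * Φ x (y * z) w * Φ x y z = Φ (x * y) z w * Φ x y (z * w)

def theta (Φ : G → G → G → K) (g a b : G) : K :=
  Φ g a b * Φ a b g / Φ a g b

namespace IsThreeCocycle

variable {Φ : G → G → G → K}

theorem apply_one_right (hΦ : IsThreeCocycle Φ) (hne : ∀ x y z, Φ x y z ≠ 0)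
    (hnorm : ∀ x y, Φ x 1 y = 1) (x y : G) : Φ x y 1 = 1 := by
  have h := hΦ x y 1 y
  simp only [hnorm, one_mul, mul_one] at h
  exact (mul_eq_left₀ (hne x y y)).1 h

theorem isTwoCocycleOn_theta (hΦ : IsThreeCocycle Φ) (hne : ∀ x y z, Φ x y z ≠ 0) (g : G) :
    IsTwoCocycleOn (Subgroup.centralizer {g}) (theta Φ g) := by
  intro e f h he hf hh
  have he : Commute e g := Subgroup.mem_centralizer_singleton_iff.1 he
  have hf : Commute f g := Subgroup.mem_centralizer_singleton_iff.1 hf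
  have hh : Commute h g := Subgroup.mem_centralizer_singleton_iff.1 hh
  have h₁ : Φ g (e * f) h = Φ (e * g) f h * Φ g e (f * h) / (Φ e f h * Φ g e f) := by
    rw [eq_div_iff (mul_ne_zero (hne _ _ _) (hne _ _ _)), he.eq]
    linear_combination hΦ g e f h
  have h₂ : Φ g f h = Φ (e * g) f h * Φ e g (f * h) / (Φ e (g * f) h * Φ e g f) := by
    rw [eq_div_iff (mul_ne_zero (hne _ _ _) (hne _ _ _))]
    linear_combination hΦ e g f h
  have h₃ : Φ f g h = Φ (e * f) g h * Φ e f (g * h) / (Φ e (f * g) h * Φ e f g) := by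
    rw [eq_div_iff (mul_ne_zero (hne _ _ _) (hne _ _ _))]
    linear_combination hΦ e f g h
  have h₄ : Φ f h g = Φ (e * f) h g * Φ e f (h * g) / (Φ e (f * h) g * Φ e f h) := by
    rw [eq_div_iff (mul_ne_zero (hne _ _ _) (hne _ _ _))]
    linear_combination hΦ e f h g
  simp only [theta]
  rw [h₁, h₂, h₃, h₄, hf.eq, hh.eq]
  field_simp [hne]

end IsThreeCocycle

end ThreeCocycle

theorem IsThreeCocycle.phiTilde_eq_theta_mul {G : Type*} [Group G] {Φ : G → G → G → ℂ}
    (hΦ : IsThreeCocycle Φ) (hne : ∀ x y z, Φ x y z ≠ 0) (hnorm : ∀ x y, Φ x 1 y = 1)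
    {g e f : G} (he : Commute e g) (hf : Commute f g) :
    PhiTilde Φ g e f =
      theta Φ g e f * (Φ g (e * f) (e * f)⁻¹ / (Φ g e e⁻¹ * Φ g f f⁻¹)) := by
  have h₁ : Φ (e * f) f⁻¹ e⁻¹ =
      Φ (e * f * g) f⁻¹ e⁻¹ * Φ g (e * f) (e * f)⁻¹ / (Φ g e e⁻¹ * Φ g (e * f) f⁻¹) := by
    rw [eq_div_iff (mul_ne_zero (hne _ _ _) (hne _ _ _)), (he.mul_left hf).eq, ← mul_assoc]
    have := hΦ g (e * f) f⁻¹ e⁻¹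
    rw [mul_inv_cancel_right, ← mul_inv_rev] at this
    linear_combination this
  have h₂ : Φ e f f⁻¹ = Φ (e * g) f f⁻¹ / (Φ g (e * f) f⁻¹ * Φ g e f) := by
    rw [eq_div_iff (mul_ne_zero (hne _ _ _) (hne _ _ _)), he.eq]
    have := hΦ g e f f⁻¹
    rw [mul_inv_cancel, hΦ.apply_one_right hne hnorm] at this
    linear_combination this
  have h₃ : Φ e (f * g) f⁻¹ = Φ (e * g) f f⁻¹ / (Φ g f f⁻¹ * Φ e g f) := by
    rw [eq_div_iff (mul_ne_zero (hne _ _ _) (hne _ _ _)), hf.eq]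
    have := hΦ e g f f⁻¹
    rw [mul_inv_cancel, hΦ.apply_one_right hne hnorm] at this
    linear_combination this
  simp only [PhiTilde, theta]
  rw [h₁, h₂, h₃]
  field_simp [hne]

/-- If `Φ` is a normalized 3-cocycle on `G` with values in `ℂ∖{0}` and `g ∈ G`, then
`Φ̃_g` is a 2-cocycle on the centralizer `Z` of `g` in `G`. -/
theorem phiTilde_is_two_cocycle_on_centralizer
    {G : Type*} [Group G] (Φ : G → G → G → ℂ)
    (hne : ∀ x y z, Φ x y z ≠ 0)
    (hcoc : ∀ x y z w,
      Φ y z w * Φ x (y * z) w * Φ x y z = Φ (x * y) z w * Φ x y (z * w))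
    (hnorm : ∀ x y, Φ x 1 y = 1)
    (g : G) :
    ∀ e f h : G, e ∈ Subgroup.centralizer {g} → f ∈ Subgroup.centralizer {g} →
      h ∈ Subgroup.centralizer {g} →
      PhiTilde Φ g f h * PhiTilde Φ g e (f * h) =
        PhiTilde Φ g e f * PhiTilde Φ g (e * f) h := by
  have hΦ : IsThreeCocycle Φ := hcoc
  have hψ : IsTwoCocycleOn (Subgroup.centralizer {g}) fun a b =>
      Φ g (a * b) (a * b)⁻¹ / (Φ g a a⁻¹ * Φ g b b⁻¹) :=
    isTwoCocycleOn_div_mul (ψ := fun x => Φ g x x⁻¹) fun x => hne _ _ _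
  refine ((hΦ.isTwoCocycleOn_theta hne g).mul hψ).congr fun a ha b hb => ?_
  exact (hΦ.phiTilde_eq_theta_mul hne hnorm (Subgroup.mem_centralizer_singleton_iff.1 ha)
    (Subgroup.mem_centralizer_singleton_iff.1 hb)).symm
end
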